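/- arXiv:math/0301025 — 3 statements merged into one kernel-verified Lean document; each statement's English description precedes it below -/
import Mathlib

section
/- For any N×N matrix M over a commutative ring and any unipotent upper-triangular matrices U₁, U₂, the determinant of the lower-left k×k corner submatrix (rows N−k+1,…,N and columns 1,…,k) of U₁·M·U₂ equals the determinant of the lower-left k×k corner submatrix of M, for every 1 ≤ k ≤ N. -/
/-- The row embedding selecting the last `k` rows of an `N×N` matrix. -/
def lastRows {N k : ℕ} (hk : k ≤ N) : Fin k → Fin N :=
  fun a => ⟨N - k + a.val, by have := a.isLt; omega⟩

lemma sum_lastRows {R : Type*} [AddCommMonoid R] {N k : ℕ} (hk : k ≤ N)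
    (F : Fin N → R) (h0 : ∀ a : Fin N, a.val < N - k → F a = 0) :
    ∑ a, F a = ∑ i : Fin k, F (lastRows hk i) := by
  have hinj : Function.Injective (lastRows hk) := by
    intro a b h
    simp only [lastRows, Fin.mk.injEq] at h
    exact Fin.ext (by omega)
  symm
  rw [← Finset.sum_image (f := F) (fun x _ y _ h => hinj h)]
  apply Finset.sum_subset (Finset.subset_univ _)
  intro a _ ha
  apply h0
  by_contra h
  push_neg at h
  exact ha (Finset.mem_image.mpr ⟨⟨a.val - (N - k), by omega⟩, Finset.mem_univ _,
    Fin.ext (by simp [lastRows]; omega)⟩)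

lemma sum_firstCols {R : Type*} [AddCommMonoid R] {N k : ℕ} (hk : k ≤ N)
    (F : Fin N → R) (h0 : ∀ a : Fin N, k ≤ a.val → F a = 0) :
    ∑ a, F a = ∑ i : Fin k, F (Fin.castLE hk i) := by
  have hinj : Function.Injective (Fin.castLE hk) := Fin.castLE_injective hk
  symm
  rw [← Finset.sum_image (f := F) (fun x _ y _ h => hinj h)]
  apply Finset.sum_subset (Finset.subset_univ _)
  intro a _ ha
  apply h0
  by_contra h
  push_neg at h
  exact ha (Finset.mem_image.mpr ⟨⟨a.val, h⟩, Finset.mem_univ _, rfl⟩)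

theorem corner_minor_invariant {R : Type*} [CommRing R] (N : ℕ)
    (M U₁ U₂ : Matrix (Fin N) (Fin N) R)
    (hU₁_tri : ∀ i j : Fin N, j < i → U₁ i j = 0) (hU₁_diag : ∀ i, U₁ i i = 1)
    (hU₂_tri : ∀ i j : Fin N, j < i → U₂ i j = 0) (hU₂_diag : ∀ i, U₂ i i = 1)
    (k : ℕ) (hk1 : 1 ≤ k) (hk : k ≤ N) :
    ((U₁ * M * U₂).submatrix (lastRows hk) (Fin.castLE hk)).det =
      (M.submatrix (lastRows hk) (Fin.castLE hk)).det := by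
  set A := U₁.submatrix (lastRows hk) (lastRows hk) with hA
  set B := M.submatrix (lastRows hk) (Fin.castLE hk) with hB
  set C := U₂.submatrix (Fin.castLE hk) (Fin.castLE hk) with hC
  have key : (U₁ * M * U₂).submatrix (lastRows hk) (Fin.castLE hk) = A * B * C := by
    ext i j
    simp only [Matrix.submatrix_apply, Matrix.mul_apply, hA, hB, hC]
    -- LHS: ∑ b, (∑ a, U₁ _ a * M a b) * U₂ b _
    have step1 : ∀ b : Fin N,
        (∑ a, U₁ (lastRows hk i) a * M a b) * U₂ b (Fin.castLE hk j)
        = ∑ i' : Fin k, U₁ (lastRows hk i) (lastRows hk i') * M (lastRows hk i') b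
            * U₂ b (Fin.castLE hk j) := by
      intro b
      rw [sum_lastRows hk (fun a => U₁ (lastRows hk i) a * M a b)
        (fun a ha => by
          show U₁ (lastRows hk i) a * M a b = 0
          rw [hU₁_tri _ _ (by simp only [lastRows, Fin.lt_def]; omega), zero_mul]),
        Finset.sum_mul]
    calc (∑ b, (∑ a, U₁ (lastRows hk i) a * M a b) * U₂ b (Fin.castLE hk j))
        = ∑ b, ∑ i' : Fin k, U₁ (lastRows hk i) (lastRows hk i') * M (lastRows hk i') b
            * U₂ b (Fin.castLE hk j) := by
          exact Finset.sum_congr rfl (fun b _ => step1 b)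
      _ = ∑ i' : Fin k, ∑ b, U₁ (lastRows hk i) (lastRows hk i') * M (lastRows hk i') b
            * U₂ b (Fin.castLE hk j) := Finset.sum_comm
      _ = ∑ i' : Fin k, ∑ j' : Fin k, U₁ (lastRows hk i) (lastRows hk i')
            * M (lastRows hk i') (Fin.castLE hk j') * U₂ (Fin.castLE hk j') (Fin.castLE hk j) := by
          refine Finset.sum_congr rfl (fun i' _ => ?_)
          exact sum_firstCols hk _ (fun b hb => by
            show _ * M _ b * U₂ b _ = 0
            rw [hU₂_tri _ _ (by simp only [Fin.lt_def, Fin.coe_castLE]; omega), mul_zero])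
      _ = ∑ j' : Fin k, (∑ i' : Fin k, U₁ (lastRows hk i) (lastRows hk i')
            * M (lastRows hk i') (Fin.castLE hk j')) * U₂ (Fin.castLE hk j') (Fin.castLE hk j) := by
          rw [Finset.sum_comm]
          exact Finset.sum_congr rfl (fun j' _ => by rw [Finset.sum_mul])
  rw [key, Matrix.det_mul, Matrix.det_mul]
  have hAdet : A.det = 1 := by
    rw [Matrix.det_of_upperTriangular]
    · exact Finset.prod_eq_one (fun i _ => hU₁_diag _)
    · intro i j hij
      simp only [hA, Matrix.submatrix_apply]
      have hij' : (j : ℕ) < i := hij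
      exact hU₁_tri _ _ (by simp only [lastRows, Fin.mk_lt_mk]; omega)
  have hCdet : C.det = 1 := by
    rw [Matrix.det_of_upperTriangular]
    · exact Finset.prod_eq_one (fun i _ => hU₂_diag _)
    · intro i j hij
      simp only [hC, Matrix.submatrix_apply]
      have hij' : (j : ℕ) < i := hij
      exact hU₂_tri _ _ (by simp only [Fin.lt_def, Fin.coe_castLE]; omega)
  rw [hAdet, hCdet, one_mul, mul_one]
end

section
/- For each 1 ≤ k ≤ N, every coefficient of the polynomial I_k(λ) = det(λ − u)_k (the k-th leading principal minor of λ − u) Poisson-commutes with every coordinate function u^{ij} with 1 ≤ i, j ≤ k, with respect to the Lie–Poisson bracket on gl(N)*. -/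
/-- The coordinate function `u^{ij}` on `gl(N,ℝ)*`. -/
noncomputable def u {N : ℕ} (i j : Fin N) : MvPolynomial (Fin N × Fin N) ℝ :=
  MvPolynomial.X (i, j)

/-- The Lie–Poisson bracket on polynomial functions on `gl(N,ℝ)*`. -/
noncomputable def pb {N : ℕ} (P Q : MvPolynomial (Fin N × Fin N) ℝ) :
    MvPolynomial (Fin N × Fin N) ℝ :=
  ∑ i : Fin N, ∑ j : Fin N, ∑ k : Fin N, ∑ l : Fin N,
    MvPolynomial.pderiv (i, j) P * MvPolynomial.pderiv (k, l) Q *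
      ((if j = k then u i l else 0) - (if l = i then u k j else 0))

/-- The matrix of coordinate functions `u = (u^{ij})`. -/
noncomputable def Umat (N : ℕ) :
    Matrix (Fin N) (Fin N) (MvPolynomial (Fin N × Fin N) ℝ) :=
  fun i j => u i j

/-- `I_k(λ) = det(λ − u)_k`, the k-th leading principal minor of `λ·Id − u`. -/
noncomputable def Ipoly {N : ℕ} (k : ℕ) (hk : k ≤ N) :
    Polynomial (MvPolynomial (Fin N × Fin N) ℝ) :=
  (((Umat N).charmatrix).submatrix (Fin.castLE hk) (Fin.castLE hk)).det

open MvPolynomial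

noncomputable abbrev RR (N : ℕ) := MvPolynomial (Fin N × Fin N) ℝ

noncomputable def DD {N : ℕ} (v : Fin N × Fin N) :
    Derivation ℝ (Polynomial (RR N)) (Polynomial (RR N)) :=
  PolynomialModule.equivPolynomialSelf.compDer (MvPolynomial.pderiv v).mapCoeffs

lemma DD_coeff {N : ℕ} (v : Fin N × Fin N) (P : Polynomial (RR N)) (m : ℕ) :
    (DD v P).coeff m = MvPolynomial.pderiv v (P.coeff m) := rfl

lemma DD_C {N : ℕ} (v : Fin N × Fin N) (r : RR N) :
    DD v (Polynomial.C r) = Polynomial.C (MvPolynomial.pderiv v r) := by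
  ext m
  rw [DD_coeff]
  rcases eq_or_ne m 0 with h | h <;> simp [h, Polynomial.coeff_C]

lemma DD_X {N : ℕ} (v : Fin N × Fin N) : DD v (Polynomial.X : Polynomial (RR N)) = 0 := by
  ext m
  rw [DD_coeff, Polynomial.coeff_X]
  split <;> simp

lemma d_prod {S : Type*} [CommRing S] [Algebra ℝ S] (d : Derivation ℝ S S)
    {ι : Type*} [DecidableEq ι] (s : Finset ι) (f : ι → S) :
    d (∏ x ∈ s, f x) = ∑ x ∈ s, (∏ y ∈ s.erase x, f y) * d (f x) := by
  induction s using Finset.induction_on with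
  | empty => simp
  | @insert a s hx ih =>
    rw [Finset.prod_insert hx, d.leibniz, Finset.sum_insert hx, Finset.erase_insert hx]
    rw [ih]
    simp only [smul_eq_mul]
    rw [Finset.mul_sum, add_comm]
    congr 1
    apply Finset.sum_congr rfl
    intro x hxs
    rw [Finset.erase_insert_of_ne (by rintro rfl; exact hx hxs),
      Finset.prod_insert (by simp [hx])]
    ring

lemma d_det {S : Type*} [CommRing S] [Algebra ℝ S] (d : Derivation ℝ S S)
    {k : ℕ} (A : Matrix (Fin k) (Fin k) S) :
    d A.det = ∑ c, (A.updateCol c (fun p => d (A p c))).det := by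
  simp only [Matrix.det_apply']
  rw [map_sum, Finset.sum_comm]
  apply Finset.sum_congr rfl
  intro σ _
  rw [d.leibniz, d.map_intCast, smul_zero, add_zero, smul_eq_mul,
    d_prod d Finset.univ, Finset.mul_sum]
  apply Finset.sum_congr rfl
  intro c _
  have hprod : ∏ x, (A.updateCol c fun p => d (A p c)) (σ x) x
      = d (A (σ c) c) * ∏ y ∈ Finset.univ.erase c, A (σ y) y := by
    rw [← Finset.mul_prod_erase Finset.univ _ (Finset.mem_univ c)]
    congr 1
    · simp [Matrix.updateCol_apply]
    · exact Finset.prod_congr rfl fun y hy => by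
        simp [Matrix.updateCol_apply, Finset.ne_of_mem_erase hy]
  rw [hprod]
  ring

noncomputable def Mk {N : ℕ} (k : ℕ) (hk : k ≤ N) :
    Matrix (Fin k) (Fin k) (Polynomial (RR N)) :=
  ((Umat N).charmatrix).submatrix (Fin.castLE hk) (Fin.castLE hk)

noncomputable def Uk {N : ℕ} (k : ℕ) (hk : k ≤ N) :
    Matrix (Fin k) (Fin k) (Polynomial (RR N)) :=
  fun p q => Polynomial.C (u (Fin.castLE hk p) (Fin.castLE hk q))

lemma Mk_apply {N : ℕ} {k : ℕ} (hk : k ≤ N) (p q : Fin k) :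
    Mk k hk p q = (if p = q then (Polynomial.X : Polynomial (RR N)) else 0)
      - Polynomial.C (u (Fin.castLE hk p) (Fin.castLE hk q)) := by
  rcases eq_or_ne p q with h | h
  · subst h
    simp [Mk, Matrix.charmatrix_apply_eq, Umat]
  · have h' : Fin.castLE hk p ≠ Fin.castLE hk q := fun hc => h (Fin.castLE_injective hk hc)
    simp [Mk, Matrix.charmatrix_apply_ne _ _ _ h', Umat, h]

lemma DD_Mk {N : ℕ} {k : ℕ} (hk : k ≤ N) (a b : Fin N) (p q : Fin k) :
    DD (a, b) (Mk k hk p q) =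
      -Polynomial.C (if (a, b) = (Fin.castLE hk p, Fin.castLE hk q) then 1 else 0) := by
  rw [Mk_apply, map_sub, DD_C]
  have h1 : DD (a, b) (if p = q then (Polynomial.X : Polynomial (RR N)) else 0) = 0 := by
    split <;> simp [DD_X]
  rw [h1, zero_sub]
  congr 1
  rw [u, pderiv_X, Pi.single_apply]
  simp [eq_comm]

lemma DD_det_Mk_zero {N : ℕ} {k : ℕ} (hk : k ≤ N) (a b : Fin N)
    (h : ¬(a.1 < k ∧ b.1 < k)) : DD (a, b) (Mk k hk).det = 0 := by
  rw [d_det]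
  apply Finset.sum_eq_zero
  intro c _
  apply Matrix.det_eq_zero_of_column_eq_zero c
  intro p
  rw [Matrix.updateCol_self, DD_Mk]
  have : ¬ (a, b) = (Fin.castLE hk p, Fin.castLE hk c) := by
    rintro hh
    rw [Prod.mk.injEq] at hh
    exact h ⟨by rw [hh.1]; exact p.isLt, by rw [hh.2]; exact c.isLt⟩
  simp [this]

lemma DD_det_Mk_lt {N : ℕ} {k : ℕ} (hk : k ≤ N) (a b : Fin N)
    (ha : a.1 < k) (hb : b.1 < k) :
    DD (a, b) (Mk k hk).det = -(Mk k hk).adjugate ⟨b.1, hb⟩ ⟨a.1, ha⟩ := by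
  rw [d_det]
  rw [Finset.sum_eq_single (⟨b.1, hb⟩ : Fin k)]
  · have hcol : (fun p => DD (a, b) (Mk k hk p ⟨b.1, hb⟩))
        = -Pi.single (⟨a.1, ha⟩ : Fin k) 1 := by
      funext p
      rw [DD_Mk]
      rcases eq_or_ne p ⟨a.1, ha⟩ with h | h
      · subst h
        simp [Prod.ext_iff, Fin.ext_iff]
      · have hne : a ≠ Fin.castLE hk p := by
          intro hh
          exact h (Fin.ext (congrArg Fin.val hh).symm)
        simp [Prod.ext_iff, hne, Pi.single_eq_of_ne h]
    rw [hcol]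
    have : (-Pi.single (⟨a.1, ha⟩ : Fin k) 1 : Fin k → Polynomial (RR N))
        = (-1 : Polynomial (RR N)) • (Pi.single (⟨a.1, ha⟩ : Fin k) 1 : Fin k → Polynomial (RR N)) := by
      funext p; rw [Pi.neg_apply, Pi.smul_apply, smul_eq_mul]; ring
    rw [this, Matrix.det_updateCol_smul]
    have hdet : (((Mk k hk).updateCol ⟨b.1, hb⟩ (Pi.single ⟨a.1, ha⟩ 1))).det
        = (Mk k hk).adjugate ⟨b.1, hb⟩ ⟨a.1, ha⟩ := by
      rw [← Matrix.det_transpose, ← Matrix.updateRow_transpose, ← Matrix.adjugate_apply,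
        ← Matrix.adjugate_transpose, Matrix.transpose_apply]
    rw [hdet]
    ring
  · intro c _ hc
    apply Matrix.det_eq_zero_of_column_eq_zero c
    intro p
    rw [Matrix.updateCol_self, DD_Mk]
    have : ¬ (a, b) = (Fin.castLE hk p, Fin.castLE hk c) := by
      rintro hh
      rw [Prod.mk.injEq] at hh
      exact hc (Fin.ext (by simpa [Fin.ext_iff] using hh.2.symm))
    simp [this]
  · simp

lemma Uk_eq {N : ℕ} {k : ℕ} (hk : k ≤ N) :
    Uk k hk = Matrix.scalar (Fin k) (Polynomial.X : Polynomial (RR N)) - Mk k hk := by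
  ext p q
  rw [Matrix.sub_apply, Mk_apply, Matrix.scalar_apply, Matrix.diagonal_apply]
  simp only [Uk]
  ring

lemma adj_comm {N : ℕ} {k : ℕ} (hk : k ≤ N) :
    (Mk k hk).adjugate * Uk k hk = Uk k hk * (Mk k hk).adjugate := by
  rw [Uk_eq, Matrix.mul_sub, Matrix.sub_mul, Matrix.adjugate_mul, Matrix.mul_adjugate]
  congr 1
  exact ((Matrix.scalar_commute Polynomial.X (fun r' => Commute.all _ _)
    ((Mk k hk).adjugate)).eq).symm

lemma sum_shrink {N k : ℕ} (hk : k ≤ N) {M : Type*} [AddCommMonoid M] (f : Fin N → M)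
    (h0 : ∀ a : Fin N, ¬ a.1 < k → f a = 0) :
    ∑ a : Fin N, f a = ∑ a : Fin k, f (Fin.castLE hk a) := by
  classical
  symm
  calc ∑ a : Fin k, f (Fin.castLE hk a)
      = ∑ a ∈ Finset.univ.map (Fin.castLEEmb hk), f a := by
        rw [Finset.sum_map]
        rfl
    _ = ∑ a : Fin N, f a :=
        Finset.sum_subset (Finset.subset_univ _) (fun x _ hx =>
          h0 x (fun hxk => hx (Finset.mem_map.mpr ⟨⟨x.1, hxk⟩, Finset.mem_univ _, rfl⟩)))

lemma key {N k : ℕ} (hk : k ≤ N) (i j : Fin N) (hi : i.1 < k) (hj : j.1 < k) :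
    ∑ a : Fin N, DD (a, i) (Mk k hk).det * Polynomial.C (u a j)
      = ∑ b : Fin N, DD (j, b) (Mk k hk).det * Polynomial.C (u i b) := by
  rw [sum_shrink hk _ (fun a ha => by
      rw [DD_det_Mk_zero hk _ _ (fun hc => ha hc.1), zero_mul]),
    sum_shrink hk _ (fun b hb => by
      rw [DD_det_Mk_zero hk _ _ (fun hc => hb hc.2), zero_mul])]
  have hL : ∑ a : Fin k, DD (Fin.castLE hk a, i) (Mk k hk).det
        * Polynomial.C (u (Fin.castLE hk a) j)
      = ∑ a : Fin k, -((Mk k hk).adjugate ⟨i.1, hi⟩ a * Uk k hk a ⟨j.1, hj⟩) := by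
    refine Finset.sum_congr rfl fun a _ => ?_
    rw [DD_det_Mk_lt hk _ _ a.isLt hi]
    exact neg_mul ((Mk k hk).adjugate ⟨i.1, hi⟩ a) (Uk k hk a ⟨j.1, hj⟩)
  have hR : ∑ b : Fin k, DD (j, Fin.castLE hk b) (Mk k hk).det
        * Polynomial.C (u i (Fin.castLE hk b))
      = ∑ b : Fin k, -(Uk k hk ⟨i.1, hi⟩ b * (Mk k hk).adjugate b ⟨j.1, hj⟩) := by
    refine Finset.sum_congr rfl fun b _ => ?_
    rw [DD_det_Mk_lt hk _ _ hj b.isLt]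
    exact (neg_mul ((Mk k hk).adjugate b ⟨j.1, hj⟩) (Uk k hk ⟨i.1, hi⟩ b)).trans
      (congrArg Neg.neg (mul_comm ((Mk k hk).adjugate b ⟨j.1, hj⟩) (Uk k hk ⟨i.1, hi⟩ b)))
  rw [hL, hR]
  have hc := congrFun (congrFun (adj_comm hk) ⟨i.1, hi⟩) ⟨j.1, hj⟩
  rw [Matrix.mul_apply, Matrix.mul_apply] at hc
  have hneg : ∀ g : Fin k → Polynomial (RR N), ∑ a : Fin k, -g a = -∑ a : Fin k, g a :=
    fun g => by simp
  rw [hneg, hneg, hc]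

theorem minor_coeff_commutes_with_corner (N : ℕ) (k : ℕ) (hk1 : 1 ≤ k)
    (hk : k ≤ N) (m : ℕ) (i j : Fin N) (hi : i.val < k) (hj : j.val < k) :
    pb ((Ipoly k hk).coeff m) (u i j) = 0 := by
  classical
  have hIp : Ipoly k hk = (Mk k hk).det := rfl
  -- coefficient-level key identity
  have keyc : ∑ a : Fin N, MvPolynomial.pderiv (a, i) ((Ipoly k hk).coeff m) * u a j
      = ∑ b : Fin N, MvPolynomial.pderiv (j, b) ((Ipoly k hk).coeff m) * u i b := by
    have h := congrArg (fun P => Polynomial.coeff P m) (key hk i j hi hj)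
    simpa [Polynomial.finset_sum_coeff, Polynomial.coeff_mul_C, DD_coeff, hIp] using h
  have hder : ∀ c d : Fin N,
      MvPolynomial.pderiv ((c, d) : Fin N × Fin N) (u i j)
        = if c = i ∧ d = j then 1 else 0 := by
    intro c d
    rw [u, pderiv_X, Pi.single_apply]
    simp [Prod.ext_iff, eq_comm, and_comm]
  rw [pb]
  simp only [hder, mul_ite, mul_one, mul_zero, ite_and, Finset.sum_ite_eq,
    Finset.sum_ite_eq', Finset.mem_univ, if_true, ite_mul, zero_mul, Finset.sum_ite_irrel,
    Finset.sum_const_zero]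
  simp only [mul_sub, Finset.sum_sub_distrib, mul_ite, mul_zero, Finset.sum_ite_eq',
    Finset.sum_ite_eq, Finset.sum_ite_irrel, Finset.sum_const_zero, Finset.mem_univ, if_true]
  rw [keyc, sub_self]
end

section
/- The Gelfand–Zetlin family is Poisson commutative: for all 1 ≤ k, l ≤ N, all coefficients of the polynomials I_k(λ) = det(λ − u)_k and I_l(λ) = det(λ − u)_l pairwise Poisson-commute with respect to the Lie–Poisson bracket on gl(N)*. -/
/-!
With `G_Q := (∂Q/∂u^{ba})_{ab}` the transposed gradient, the Lie–Poisson bracket is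
`{P, Q} = tr (G_P [u, G_Q])`. By Jacobi's formula, for a coefficient `Q` of
`I_l(λ) = det(λ - u_l)`, `G_Q` vanishes outside the leading `l × l` block and equals the matching
coefficient of `-adj(λ - u_l)` on it; this adjugate commutes with `u_l`, so `[u, G_Q]` vanishes on
the block. For `k ≤ l` the gradient of a coefficient of `I_k` is supported in the `k × k` block,
so the trace vanishes; the case `k > l` follows by antisymmetry.
-/

open Polynomial Matrix Finset

namespace Matrix

theorem det_updateRow_eq_sum_mul_adjugate {A n : Type*} [CommRing A] [Fintype n] [DecidableEq n]
    (M : Matrix n n A) (i : n) (v : n → A) :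
    (M.updateRow i v).det = ∑ j, v j * M.adjugate j i := by
  rw [det_eq_sum_mul_adjugate_row _ i, updateRow_self]
  refine sum_congr rfl fun j _ => ?_
  rw [adjugate_apply, adjugate_apply]
  congr 2
  ext a b
  by_cases h : a = i <;> simp [updateRow_apply, h]

theorem submatrix_mul_of_injective {α l m n o p q : Type*} [NonUnitalNonAssocSemiring α]
    [Fintype m] [Fintype o] {A : Matrix l m α} {B : Matrix m n α} (e₁ : p → l) {e₂ : o → m}
    (e₃ : q → n) (he₂ : Function.Injective e₂)
    (h : ∀ k ∉ Set.range e₂, ∀ i j, A (e₁ i) k * B k (e₃ j) = 0) :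
    (A * B).submatrix e₁ e₃ = A.submatrix e₁ e₂ * B.submatrix e₂ e₃ := by
  ext i j
  exact (Fintype.sum_of_injective e₂ he₂ _ _ (fun k hk => h k hk i j) (fun _ => rfl)).symm

variable {A n : Type*} [CommRing A] [Fintype n] [DecidableEq n]

theorem commute_map_C_adjugate_charmatrix (M : Matrix n n A) :
    Commute (M.map C) (charmatrix M).adjugate := by
  have hM : M.map C = scalar n (X : A[X]) - charmatrix M := by
    rw [charmatrix, sub_sub_cancel, RingHom.mapMatrix_apply]
  rw [hM]
  refine .sub_left (scalar_commute _ (fun _ => .all _ _) _) ?_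
  exact (mul_adjugate _).trans (adjugate_mul _).symm

theorem commute_map_coeff_adjugate_charmatrix (M : Matrix n n A) (k : ℕ) :
    Commute M ((charmatrix M).adjugate.map (coeff · k)) := by
  have h := (commute_map_C_adjugate_charmatrix M).map matPolyEquiv
  rw [matPolyEquiv_map_C] at h
  have hcoeff : (charmatrix M).adjugate.map (coeff · k) =
      (matPolyEquiv (charmatrix M).adjugate).coeff k := by
    ext i j
    simp [matPolyEquiv_coeff_apply]
  rw [hcoeff, Commute, SemiconjBy, ← coeff_C_mul, ← coeff_mul_C, h.eq]

end Matrix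

namespace Derivation

variable {R A : Type*} [CommRing R] [CommRing A] [Algebra R A] (D : Derivation R A A)

theorem leibniz_finsetProd {ι : Type*} [DecidableEq ι] (s : Finset ι) (f : ι → A) :
    D (∏ i ∈ s, f i) = ∑ i ∈ s, (∏ j ∈ s.erase i, f j) * D (f i) := by
  induction s using Finset.induction_on with
  | empty => simp
  | insert a s ha ih =>
    rw [prod_insert ha, leibniz, ih, sum_insert ha, erase_insert ha, smul_eq_mul, smul_eq_mul,
      mul_sum, add_comm]
    congr 1
    refine sum_congr rfl fun i hi => ?_
    rw [erase_insert_of_ne (ne_of_mem_of_not_mem hi ha).symm,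
      prod_insert fun h => ha (mem_of_mem_erase h)]
    ring

variable {n : Type*} [Fintype n] [DecidableEq n]

theorem apply_det_eq_sum_det_updateRow (M : Matrix n n A) :
    D M.det = ∑ i, (M.updateRow i fun j => D (M i j)).det := by
  have expand : ∀ B : Matrix n n A,
      B.det = ∑ σ : Equiv.Perm n, (Equiv.Perm.sign σ : A) * ∏ i, B i (σ i) := by
    intro B
    rw [← det_transpose, det_apply']
    rfl
  simp only [expand, map_sum, leibniz, Derivation.map_intCast, leibniz_finsetProd, smul_eq_mul,
    mul_zero, add_zero, mul_sum]
  rw [sum_comm]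
  refine sum_congr rfl fun i _ => sum_congr rfl fun σ _ => ?_
  rw [← mul_prod_erase _ _ (mem_univ i), updateRow_self,
    prod_congr rfl fun j hj => congrFun (updateRow_ne (ne_of_mem_erase hj)) (σ j)]
  ring

theorem apply_det (M : Matrix n n A) :
    D M.det = ∑ i, ∑ j, D (M i j) * M.adjugate j i := by
  rw [apply_det_eq_sum_det_updateRow]
  exact sum_congr rfl fun i _ => det_updateRow_eq_sum_mul_adjugate M i _

noncomputable def coeffwise : Derivation R A[X] A[X] :=
  PolynomialModule.equivPolynomialSelf.compDer D.mapCoeffs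

@[simp]
theorem coeff_coeffwise (p : A[X]) (k : ℕ) : (D.coeffwise p).coeff k = D (p.coeff k) := rfl

@[simp]
theorem coeffwise_C (a : A) : D.coeffwise (C a) = C (D a) := by
  ext k
  simp [coeff_C, apply_ite D]

@[simp]
theorem coeffwise_X : D.coeffwise (X : A[X]) = 0 := by
  ext k
  simp [coeff_X, apply_ite D]

theorem coeffwise_charmatrix_apply (M : Matrix n n A) (i j : n) :
    D.coeffwise (charmatrix M i j) = -C (D (M i j)) := by
  by_cases h : i = j
  · subst h
    simp
  · simp [charmatrix_apply_ne _ _ _ h]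

theorem apply_coeff_charpoly (M : Matrix n n A) (k : ℕ) :
    D (M.charpoly.coeff k) = -∑ i, ∑ j, D (M i j) * ((charmatrix M).adjugate j i).coeff k := by
  rw [← coeff_coeffwise, charpoly, apply_det]
  simp [coeffwise_charmatrix_apply, finsetSum_coeff, coeff_C_mul]

end Derivation

section LiePoisson

variable {N : ℕ}

open MvPolynomial

noncomputable def gradMatrix (Q : MvPolynomial (Fin N × Fin N) ℝ) :
    Matrix (Fin N) (Fin N) (MvPolynomial (Fin N × Fin N) ℝ) :=
  Matrix.of fun a b => pderiv (b, a) Q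

theorem pb_eq_trace (P Q : MvPolynomial (Fin N × Fin N) ℝ) :
    pb P Q = trace (gradMatrix P * (Umat N * gradMatrix Q - gradMatrix Q * Umat N)) := by
  simp only [pb, trace, diag_apply, Matrix.mul_apply, mul_assoc, ← mul_sum]
  rw [sum_comm]
  refine sum_congr rfl fun i _ => sum_congr rfl fun j _ => congrArg _ ?_
  simp only [Matrix.sub_apply, Matrix.mul_apply, gradMatrix, Umat, of_apply, mul_sub,
    sum_sub_distrib, mul_ite, mul_zero, sum_ite_irrel, sum_const_zero, sum_ite_eq, sum_ite_eq',
    mem_univ, if_true]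
  simp only [mul_comm]

theorem pb_antisymm (P Q : MvPolynomial (Fin N × Fin N) ℝ) : pb P Q = -pb Q P := by
  simp only [pb_eq_trace, Matrix.mul_sub, trace_sub, ← Matrix.mul_assoc]
  rw [trace_mul_cycle (gradMatrix P) (Umat N) (gradMatrix Q),
    trace_mul_cycle (gradMatrix Q) (Umat N) (gradMatrix P), neg_sub]

section Block

variable {l : ℕ} (hl : l ≤ N)

noncomputable def Ublock : Matrix (Fin l) (Fin l) (MvPolynomial (Fin N × Fin N) ℝ) :=
  (Umat N).submatrix (Fin.castLE hl) (Fin.castLE hl)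

theorem Ublock_apply (a b : Fin l) :
    Ublock hl a b = X (Fin.castLE hl a, Fin.castLE hl b) := rfl

theorem Ipoly_eq_charpoly : Ipoly l hl = (Ublock hl).charpoly := by
  unfold Ipoly charpoly Ublock
  congr 1
  ext a b
  by_cases h : a = b
  · subst h
    simp
  · simp [charmatrix_apply_ne _ _ _ h, charmatrix_apply_ne _ _ _ ((Fin.castLE_injective hl).ne h)]

theorem submatrix_gradMatrix_Ipoly_coeff (m : ℕ) :
    (gradMatrix ((Ipoly l hl).coeff m)).submatrix (Fin.castLE hl) (Fin.castLE hl) =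
      -(Ublock hl).charmatrix.adjugate.map (coeff · m) := by
  refine Matrix.ext fun a b => ?_
  rw [submatrix_apply, gradMatrix, of_apply, Ipoly_eq_charpoly, Derivation.apply_coeff_charpoly]
  simp [Ublock_apply, pderiv_X, Pi.single_apply, (Fin.castLE_injective hl).eq_iff, ite_and]

theorem gradMatrix_Ipoly_coeff_eq_zero (m : ℕ) {a b : Fin N}
    (hab : ¬ ((a : ℕ) < l ∧ (b : ℕ) < l)) :
    gradMatrix ((Ipoly l hl).coeff m) a b = 0 := by
  rw [gradMatrix, of_apply, Ipoly_eq_charpoly, Derivation.apply_coeff_charpoly]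
  simp only [Ublock_apply, pderiv_X, Pi.single_apply]
  refine neg_eq_zero.2 (sum_eq_zero fun i _ => sum_eq_zero fun j _ => ?_)
  rw [if_neg, zero_mul]
  rintro ⟨-, -⟩
  exact hab ⟨j.2, i.2⟩

theorem submatrix_commutator_gradMatrix_Ipoly_coeff (m : ℕ) :
    (Umat N * gradMatrix ((Ipoly l hl).coeff m) - gradMatrix ((Ipoly l hl).coeff m) * Umat N
      ).submatrix (Fin.castLE hl) (Fin.castLE hl) = 0 := by
  have hout : ∀ c ∉ Set.range (Fin.castLE hl), ∀ d, gradMatrix ((Ipoly l hl).coeff m) c d = 0 ∧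
      gradMatrix ((Ipoly l hl).coeff m) d c = 0 := by
    intro c hc d
    rw [Fin.range_castLE, Set.mem_ofPred_eq] at hc
    exact ⟨gradMatrix_Ipoly_coeff_eq_zero hl m (fun h => hc h.1),
      gradMatrix_Ipoly_coeff_eq_zero hl m (fun h => hc h.2)⟩
  rw [submatrix_sub, Pi.sub_apply, Pi.sub_apply,
    submatrix_mul_of_injective _ _ (Fin.castLE_injective hl)
      fun c hc i j => by rw [(hout c hc _).1, mul_zero],
    submatrix_mul_of_injective _ _ (Fin.castLE_injective hl)
      fun c hc i j => by rw [(hout c hc _).2, zero_mul],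
    submatrix_gradMatrix_Ipoly_coeff, Matrix.mul_neg, Matrix.neg_mul, sub_eq_zero]
  exact congrArg Neg.neg (commute_map_coeff_adjugate_charmatrix (Ublock hl) m).eq

theorem pb_Ipoly_coeff_eq_zero (m : ℕ) (P : MvPolynomial (Fin N × Fin N) ℝ)
    (hP : ∀ a b : Fin N, ¬ ((a : ℕ) < l ∧ (b : ℕ) < l) → gradMatrix P a b = 0) :
    pb P ((Ipoly l hl).coeff m) = 0 := by
  rw [pb_eq_trace, trace]
  refine sum_eq_zero fun i _ => ?_
  rw [diag_apply, Matrix.mul_apply]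
  refine sum_eq_zero fun j _ => ?_
  by_cases hij : (i : ℕ) < l ∧ (j : ℕ) < l
  · exact mul_eq_zero_of_right _
      (congrFun₂ (submatrix_commutator_gradMatrix_Ipoly_coeff hl m) ⟨j, hij.2⟩ ⟨i, hij.1⟩)
  · rw [hP i j hij, zero_mul]

end Block

theorem pb_Ipoly_coeff_of_le {k l : ℕ} (hk : k ≤ N) (hl : l ≤ N) (hkl : k ≤ l) (m m' : ℕ) :
    pb ((Ipoly k hk).coeff m) ((Ipoly l hl).coeff m') = 0 :=
  pb_Ipoly_coeff_eq_zero hl m' _ fun _ _ hab => gradMatrix_Ipoly_coeff_eq_zero hk m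
    fun h => hab ⟨h.1.trans_le hkl, h.2.trans_le hkl⟩

end LiePoisson

theorem gelfand_zetlin_commutes_general (N : ℕ) (k l : ℕ) (hk : k ≤ N) (hl : l ≤ N) (m m' : ℕ) :
    pb ((Ipoly k hk).coeff m) ((Ipoly l hl).coeff m') = 0 := by
  rcases le_total k l with hkl | hlk
  · exact pb_Ipoly_coeff_of_le hk hl hkl m m'
  · rw [pb_antisymm, pb_Ipoly_coeff_of_le hl hk hlk m' m, neg_zero]

theorem gelfand_zetlin_commutes (N : ℕ) (k l : ℕ) (hk1 : 1 ≤ k) (hk : k ≤ N)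
    (hl1 : 1 ≤ l) (hl : l ≤ N) (m m' : ℕ) :
    pb ((Ipoly k hk).coeff m) ((Ipoly l hl).coeff m') = 0 :=
  gelfand_zetlin_commutes_general N k l hk hl m m'
end
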